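/- arXiv:2605.08710 — 3 statements merged into one kernel-verified Lean document; each statement's English description precedes it below -/
import Mathlib

section
/- Let Y, ŶH, ŶM be {0,1}-valued random variables with accuracies a_H = P(ŶH = Y), a_M = P(ŶM = Y), and let S be a selector with team accuracy a_S = P(Ŷ_S = Y). Suppose the disagreement probability p_D = P(ŶH ≠ ŶM) is positive, and let q = P(Ŷ_S = Y | ŶH ≠ ŶM). Then the complementarity gain over the average individual accuracy satisfies a_S − (a_H + a_M)/2 = p_D·(q − 1/2). -/
open MeasureTheory ProbabilityTheory

/-- The two agents: human `H` and machine `M`. -/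
inductive Agent : Type
  | H : Agent
  | M : Agent
  deriving DecidableEq

instance : MeasurableSpace Agent := ⊤

/-- The team prediction of a selector `S`: it equals `ŶH` on `{S = H}` and `ŶM` on `{S = M}`. -/
def teamPred {Ω : Type*} (YH YM : Ω → Bool) (S : Ω → Agent) (ω : Ω) : Bool :=
  match S ω with
  | Agent.H => YH ω
  | Agent.M => YM ω

/-- **Complementarity gain identity.** If the disagreement probability `p_D = P(ŶH ≠ ŶM)`
is positive and `q = P(Ŷ_S = Y | ŶH ≠ ŶM)`, then the gain of the team accuracy `a_S` over
the average individual accuracy satisfies `a_S − (a_H + a_M)/2 = p_D·(q − 1/2)`. -/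
theorem complementarity_gain_identity
    {Ω : Type*} [MeasureSpace Ω] [IsProbabilityMeasure (ℙ : Measure Ω)]
    (Y YH YM : Ω → Bool) (hY : Measurable Y) (hYH : Measurable YH) (hYM : Measurable YM)
    (S : Ω → Agent) (hS : Measurable S)
    (aH aM aS : ℝ)
    (haH : aH = (ℙ {ω | YH ω = Y ω}).toReal) (haM : aM = (ℙ {ω | YM ω = Y ω}).toReal)
    (haS : aS = (ℙ {ω | teamPred YH YM S ω = Y ω}).toReal)
    (pD : ℝ) (hpD : pD = (ℙ {ω | YH ω ≠ YM ω}).toReal) (hpDpos : 0 < pD)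
    (q : ℝ)
    (hq : q = (ℙ ({ω | YH ω ≠ YM ω} ∩ {ω | teamPred YH YM S ω = Y ω})).toReal / pD) :
    aS - (aH + aM) / 2 = pD * (q - 1 / 2) := by
  classical
  set D : Set Ω := {ω | YH ω ≠ YM ω} with hD
  have hTm : Measurable (teamPred YH YM S) := by
    have : teamPred YH YM S = fun ω => if S ω = Agent.H then YH ω else YM ω := by
      funext ω
      cases h : S ω <;> simp [teamPred, h]
    rw [this]
    exact Measurable.ite (hS (show MeasurableSet {Agent.H} from trivial)) hYH hYM
  have hDm : MeasurableSet D := (measurableSet_eq_fun hYH hYM).compl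
  have hHm : MeasurableSet {ω | YH ω = Y ω} := measurableSet_eq_fun hYH hY
  have hMm : MeasurableSet {ω | YM ω = Y ω} := measurableSet_eq_fun hYM hY
  have hSm : MeasurableSet {ω | teamPred YH YM S ω = Y ω} := measurableSet_eq_fun hTm hY
  -- split each accuracy event over D
  have splitH : ℙ {ω | YH ω = Y ω}
      = ℙ ({ω | YH ω = Y ω} ∩ D) + ℙ ({ω | YH ω = Y ω} \ D) :=
    (measure_inter_add_diff _ hDm).symm
  have splitM : ℙ {ω | YM ω = Y ω}
      = ℙ ({ω | YM ω = Y ω} ∩ D) + ℙ ({ω | YM ω = Y ω} \ D) :=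
    (measure_inter_add_diff _ hDm).symm
  have splitS : ℙ {ω | teamPred YH YM S ω = Y ω}
      = ℙ ({ω | teamPred YH YM S ω = Y ω} ∩ D) + ℙ ({ω | teamPred YH YM S ω = Y ω} \ D) :=
    (measure_inter_add_diff _ hDm).symm
  -- off-D, all three events coincide
  have hHM : {ω | YM ω = Y ω} \ D = {ω | YH ω = Y ω} \ D := by
    ext ω
    simp only [Set.mem_diff, Set.mem_setOf_eq, hD, not_not]
    constructor
    · rintro ⟨h1, h2⟩; exact ⟨h2.trans h1, h2⟩
    · rintro ⟨h1, h2⟩; exact ⟨h2.symm.trans h1, h2⟩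
  have hHS : {ω | teamPred YH YM S ω = Y ω} \ D = {ω | YH ω = Y ω} \ D := by
    ext ω
    simp only [Set.mem_diff, Set.mem_setOf_eq, hD, not_not]
    have ht : teamPred YH YM S ω = YH ω ∨ teamPred YH YM S ω = YM ω := by
      cases h : S ω <;> simp [teamPred, h]
    constructor
    · rintro ⟨h1, h2⟩
      rcases ht with h | h
      · exact ⟨h ▸ h1, h2⟩
      · exact ⟨h2.trans (h ▸ h1), h2⟩
    · rintro ⟨h1, h2⟩
      rcases ht with h | h
      · exact ⟨h.trans h1, h2⟩
      · exact ⟨h.trans (h2.symm.trans h1), h2⟩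
  -- on D, the correctness events of H and M partition D
  have hpart : ℙ ({ω | YH ω = Y ω} ∩ D) + ℙ ({ω | YM ω = Y ω} ∩ D) = ℙ D := by
    rw [← measure_union ?_ (hMm.inter hDm)]
    · congr 1
      ext ω
      simp only [Set.mem_union, Set.mem_inter_iff, Set.mem_setOf_eq, hD]
      constructor
      · rintro (⟨h1, h2⟩ | ⟨h1, h2⟩) <;> exact h2
      · intro h2
        rcases Bool.eq_or_eq_not (YH ω) (Y ω) with h | h
        · exact Or.inl ⟨h, h2⟩
        · right
          refine ⟨?_, h2⟩
          cases hy : Y ω <;> cases hm : YM ω <;> simp_all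
    · intro s hs1 hs2 ω hω
      have h1 := hs1 hω
      have h2 := hs2 hω
      simp only [Set.mem_inter_iff, Set.mem_setOf_eq, hD] at h1 h2
      exact absurd (h1.1.trans h2.1.symm) h2.2
  -- abbreviations
  set a : ℝ := (ℙ ({ω | YH ω = Y ω} \ D)).toReal with ha
  have fin : ∀ s : Set Ω, ℙ s ≠ ⊤ := fun s => measure_ne_top _ _
  have toReal_add : ∀ s t : Set Ω, (ℙ s + ℙ t).toReal = (ℙ s).toReal + (ℙ t).toReal :=
    fun s t => ENNReal.toReal_add (fin s) (fin t)
  have hpD' : pD = (ℙ ({ω | YH ω = Y ω} ∩ D)).toReal + (ℙ ({ω | YM ω = Y ω} ∩ D)).toReal := by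
    rw [hpD, ← toReal_add, hpart]
  have haS' : aS = (ℙ (D ∩ {ω | teamPred YH YM S ω = Y ω})).toReal + a := by
    rw [haS, splitS, toReal_add, hHS, Set.inter_comm]
  have haH' : aH = (ℙ ({ω | YH ω = Y ω} ∩ D)).toReal + a := by
    rw [haH, splitH, toReal_add]
  have haM' : aM = (ℙ ({ω | YM ω = Y ω} ∩ D)).toReal + a := by
    rw [haM, splitM, toReal_add, hHM]
  have hqpD : q * pD = (ℙ (D ∩ {ω | teamPred YH YM S ω = Y ω})).toReal := by
    rw [hq, div_mul_cancel₀]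
    exact ne_of_gt hpDpos
  have : pD * (q - 1 / 2) = q * pD - pD / 2 := by ring
  rw [this, hqpD, haS', haH', haM', hpD']
  ring
end

section
/- Let Y, ŶH, ŶM be {0,1}-valued random variables with error events E_H = {ŶH ≠ Y}, E_M = {ŶM ≠ Y}, error rates 0 < e_H < 1 and 0 < e_M < 1, error-indicator correlation ρ = Corr(1_{E_H}, 1_{E_M}), e* = min(e_H, e_M) and a* = max(1 − e_H, 1 − e_M). If ρ ≥ (e* − e_H·e_M)/√(e_H(1−e_H)·e_M(1−e_M)), then no selector achieves complementarity: every {H,M}-valued selector S satisfies P(Ŷ_S = Y) ≤ a*. -/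
/-! A selector can only be right where at least one agent is right, so its accuracy is at most
`1 - P(E_H ∩ E_M)`. Since `E[1_{E_H} 1_{E_M}] = P(E_H ∩ E_M)`, the threshold on `ρ` says exactly
that `P(E_H ∩ E_M) ≥ min(e_H, e_M)`, and `1 - min(e_H, e_M) = max(a_H, a_M)`. -/

open MeasureTheory ProbabilityTheory

theorem integral_indicator_one_mul_indicator_one {Ω : Type*} [MeasurableSpace Ω] {μ : Measure Ω}
    {s t : Set Ω} (hs : MeasurableSet s) (ht : MeasurableSet t) :
    ∫ ω, s.indicator (fun _ => (1 : ℝ)) ω * t.indicator (fun _ => (1 : ℝ)) ω ∂μ = μ.real (s ∩ t) := by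
  rw [← integral_indicator_one (hs.inter ht), Set.inter_indicator_one]
  rfl

theorem le_of_sub_div_sqrt_mul_le {u v c p q : ℝ} (hu : 0 < u) (hv : 0 < v)
    (h : (c - q) / Real.sqrt (u * v) ≤ (p - q) / (Real.sqrt u * Real.sqrt v)) : c ≤ p := by
  rw [← Real.sqrt_mul hu.le,
    div_le_div_iff_of_pos_right (Real.sqrt_pos.mpr (mul_pos hu hv))] at h
  linarith

theorem setOf_teamPred_eq_subset {Ω : Type*} (Y YH YM : Ω → Bool) (S : Ω → Agent) :
    {ω | teamPred YH YM S ω = Y ω} ⊆ ({ω | YH ω ≠ Y ω} ∩ {ω | YM ω ≠ Y ω})ᶜ := by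
  rintro ω hω ⟨hH, hM⟩
  simp only [Set.mem_ofPred_eq, teamPred] at hω
  split at hω
  exacts [hH hω, hM hω]

theorem measureReal_teamPred_eq_le {Ω : Type*} [MeasurableSpace Ω] (μ : Measure Ω)
    [IsProbabilityMeasure μ] {Y YH YM : Ω → Bool} (hY : Measurable Y) (hYH : Measurable YH)
    (hYM : Measurable YM) (S : Ω → Agent) :
    μ.real {ω | teamPred YH YM S ω = Y ω}
      ≤ 1 - μ.real ({ω | YH ω ≠ Y ω} ∩ {ω | YM ω ≠ Y ω}) := by
  have hboth : MeasurableSet ({ω | YH ω ≠ Y ω} ∩ {ω | YM ω ≠ Y ω}) :=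
    (measurableSet_eq_fun hYH hY).compl.inter (measurableSet_eq_fun hYM hY).compl
  rw [← probReal_compl_eq_one_sub hboth]
  exact measureReal_mono (setOf_teamPred_eq_subset Y YH YM S)

theorem impossibility_of_complementarity_general
    {Ω : Type*} [MeasureSpace Ω] [IsProbabilityMeasure (ℙ : Measure Ω)]
    (Y YH YM : Ω → Bool) (hY : Measurable Y) (hYH : Measurable YH) (hYM : Measurable YM)
    (EH EM : Set Ω) (hEHdef : EH = {ω | YH ω ≠ Y ω}) (hEMdef : EM = {ω | YM ω ≠ Y ω})
    (eH eM : ℝ)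
    (heH0 : 0 < eH) (heH1 : eH < 1) (heM0 : 0 < eM) (heM1 : eM < 1)
    (ρ : ℝ)
    (hρ : ρ = ((∫ ω, (EH.indicator (fun _ => (1 : ℝ)) ω) * (EM.indicator (fun _ => (1 : ℝ)) ω) ∂ℙ)
        - eH * eM) / (Real.sqrt (eH * (1 - eH)) * Real.sqrt (eM * (1 - eM))))
    (hthresh : ρ ≥ (min eH eM - eH * eM) / Real.sqrt (eH * (1 - eH) * (eM * (1 - eM)))) :
    ∀ S : Ω → Agent, Measurable S →
      (ℙ {ω | teamPred YH YM S ω = Y ω}).toReal ≤ max (1 - eH) (1 - eM) := by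
  intro S _
  subst hρ hEHdef hEMdef
  have hEH : MeasurableSet {ω | YH ω ≠ Y ω} := (measurableSet_eq_fun hYH hY).compl
  have hEM : MeasurableSet {ω | YM ω ≠ Y ω} := (measurableSet_eq_fun hYM hY).compl
  rw [integral_indicator_one_mul_indicator_one hEH hEM] at hthresh
  have hmin_le_both := le_of_sub_div_sqrt_mul_le
    (mul_pos heH0 (sub_pos.2 heH1)) (mul_pos heM0 (sub_pos.2 heM1)) hthresh
  calc (ℙ {ω | teamPred YH YM S ω = Y ω}).toReal
      ≤ 1 - Measure.real ℙ ({ω | YH ω ≠ Y ω} ∩ {ω | YM ω ≠ Y ω}) :=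
        measureReal_teamPred_eq_le ℙ hY hYH hYM S
    _ ≤ 1 - min eH eM := by linarith
    _ = max (1 - eH) (1 - eM) := (max_sub_sub_left 1 eH eM).symm

/-- **Impossibility of complementarity.** With error rates `e_H, e_M ∈ (0,1)`,
error-indicator correlation `ρ`, `e* = min(e_H, e_M)` and `a* = max(1−e_H, 1−e_M)`:
if `ρ ≥ (e* − e_H·e_M)/√(e_H(1−e_H)·e_M(1−e_M))`, then no selector achieves
complementarity: every selector `S` satisfies `P(Ŷ_S = Y) ≤ a*`. -/
theorem impossibility_of_complementarity
    {Ω : Type*} [MeasureSpace Ω] [IsProbabilityMeasure (ℙ : Measure Ω)]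
    (Y YH YM : Ω → Bool) (hY : Measurable Y) (hYH : Measurable YH) (hYM : Measurable YM)
    (EH EM : Set Ω) (hEHdef : EH = {ω | YH ω ≠ Y ω}) (hEMdef : EM = {ω | YM ω ≠ Y ω})
    (eH eM : ℝ) (heH : eH = (ℙ EH).toReal) (heM : eM = (ℙ EM).toReal)
    (heH0 : 0 < eH) (heH1 : eH < 1) (heM0 : 0 < eM) (heM1 : eM < 1)
    (ρ : ℝ)
    (hρ : ρ = ((∫ ω, (EH.indicator (fun _ => (1 : ℝ)) ω) * (EM.indicator (fun _ => (1 : ℝ)) ω) ∂ℙ)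
        - eH * eM) / (Real.sqrt (eH * (1 - eH)) * Real.sqrt (eM * (1 - eM))))
    (hthresh : ρ ≥ (min eH eM - eH * eM) / Real.sqrt (eH * (1 - eH) * (eM * (1 - eM)))) :
    ∀ S : Ω → Agent, Measurable S →
      (ℙ {ω | teamPred YH YM S ω = Y ω}).toReal ≤ max (1 - eH) (1 - eM) :=
  impossibility_of_complementarity_general Y YH YM hY hYH hYM EH EM hEHdef hEMdef eH eM heH0 heH1
    heM0 heM1 ρ hρ hthresh
end

section
/- Let Φ denote the CDF of the standard Gaussian measure on ℝ, let a* ∈ (0,1), e* = 1 − a*, and d₋ ∈ ℝ, and for ρ ∈ [0,1) let κ(ρ) be the unique nonnegative real with Φ(κ(ρ)/√2) = (1 + ρ)/2. Then the optimal team accuracy function A(ρ) = a* + e*·Φ((d₋ − κ(ρ))/√2) is strictly decreasing in ρ on [0,1), and A(ρ) < 1 for every ρ ∈ [0,1). -/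
open MeasureTheory ProbabilityTheory

/-- `Φ`, the cumulative distribution function of the standard Gaussian measure on `ℝ`
(mean 0, variance 1). -/
noncomputable def stdGaussianCDF (x : ℝ) : ℝ :=
  ((gaussianReal 0 1) (Set.Iic x)).toReal

/-!
Since the standard Gaussian charges every nonempty open set, `Φ` is strictly increasing and
stays below `1`. The defining equation of `κ` then forces `κ` to be strictly increasing, and
`A = f ∘ κ` with `f t = a* + e*·Φ((d₋ − t)/√2)` strictly decreasing because `e* > 0`.
-/

open Set

lemma isOpenPosMeasure_gaussianReal (μ : ℝ) {v : NNReal} (hv : v ≠ 0) :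
    (gaussianReal μ v).IsOpenPosMeasure :=
  (gaussianReal_absolutelyContinuous' μ hv).isOpenPosMeasure

section OpenPos

variable {μ : Measure ℝ} [IsFiniteMeasure μ] [μ.IsOpenPosMeasure]

lemma strictMono_measureReal_Iic : StrictMono fun x ↦ μ.real (Iic x) := by
  intro x y hxy
  have hpos : 0 < μ.real (Ioo x y) :=
    ENNReal.toReal_pos (isOpen_Ioo.measure_ne_zero μ (nonempty_Ioo.2 hxy)) (measure_ne_top _ _)
  have hle : μ.real (Ioo x y) ≤ μ.real (Iic y \ Iic x) :=
    measureReal_mono fun z hz ↦ ⟨hz.2.le, not_le.2 hz.1⟩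
  rw [measureReal_sdiff (Iic_subset_Iic.2 hxy.le) measurableSet_Iic] at hle
  linarith

lemma measureReal_Iic_lt_univ (x : ℝ) : μ.real (Iic x) < μ.real univ := by
  have hpos : 0 < μ.real (Ioi x) :=
    ENNReal.toReal_pos (Measure.measure_Ioi_pos μ x).ne' (measure_ne_top _ _)
  rw [← compl_Iic, measureReal_compl measurableSet_Iic] at hpos
  linarith

end OpenPos

lemma stdGaussianCDF_strictMono : StrictMono stdGaussianCDF :=
  have := isOpenPosMeasure_gaussianReal 0 one_ne_zero
  strictMono_measureReal_Iic

lemma stdGaussianCDF_lt_one (x : ℝ) : stdGaussianCDF x < 1 := by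
  show (gaussianReal 0 1).real (Iic x) < 1
  have := isOpenPosMeasure_gaussianReal 0 one_ne_zero
  simpa using measureReal_Iic_lt_univ (μ := gaussianReal 0 1) x

theorem optimal_team_accuracy_decreasing_general
    (aStar eStar dMinus : ℝ) (haStar1 : aStar < 1)
    (heStar : eStar = 1 - aStar)
    (κ : ℝ → ℝ)
    (hκ : ∀ ρ ∈ Set.Ico (0 : ℝ) 1,
      0 ≤ κ ρ ∧ stdGaussianCDF (κ ρ / Real.sqrt 2) = (1 + ρ) / 2)
    (A : ℝ → ℝ)
    (hA : A = fun ρ => aStar + eStar * stdGaussianCDF ((dMinus - κ ρ) / Real.sqrt 2)) :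
    StrictAntiOn A (Set.Ico (0 : ℝ) 1) ∧ ∀ ρ ∈ Set.Ico (0 : ℝ) 1, A ρ < 1 := by
  have heStar_pos : 0 < eStar := by linarith
  have hκ_mono : StrictMonoOn κ (Ico 0 1) := fun ρ₁ hρ₁ ρ₂ hρ₂ h ↦ by
    have hΦ : stdGaussianCDF (κ ρ₁ / √2) < stdGaussianCDF (κ ρ₂ / √2) := by
      rw [(hκ ρ₁ hρ₁).2, (hκ ρ₂ hρ₂).2]
      linarith
    exact (div_lt_div_iff_of_pos_right (by positivity)).1
      (stdGaussianCDF_strictMono.lt_iff_lt.1 hΦ)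
  have hf_anti : StrictAnti fun t ↦ aStar + eStar * stdGaussianCDF ((dMinus - t) / √2) :=
    ((stdGaussianCDF_strictMono.comp_strictAnti fun s t hst ↦ by gcongr).const_mul
      heStar_pos).const_add aStar
  subst hA
  refine ⟨hf_anti.comp_strictMonoOn hκ_mono, fun ρ _ ↦ ?_⟩
  calc aStar + eStar * stdGaussianCDF ((dMinus - κ ρ) / √2)
      < aStar + eStar * 1 := by gcongr; exact stdGaussianCDF_lt_one _
    _ = 1 := by rw [heStar]; ring

/-- **Optimal team accuracy is strictly decreasing in error correlation.** With
`a* ∈ (0,1)`, `e* = 1 − a*`, `d₋ ∈ ℝ`, and `κ(ρ)` the unique nonnegative real with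
`Φ(κ(ρ)/√2) = (1+ρ)/2`, the optimal team accuracy
`A(ρ) = a* + e*·Φ((d₋ − κ(ρ))/√2)` is strictly decreasing on `[0,1)` and `A(ρ) < 1`
for every `ρ ∈ [0,1)`. -/
theorem optimal_team_accuracy_decreasing
    (aStar eStar dMinus : ℝ) (haStar0 : 0 < aStar) (haStar1 : aStar < 1)
    (heStar : eStar = 1 - aStar)
    (κ : ℝ → ℝ)
    (hκ : ∀ ρ ∈ Set.Ico (0 : ℝ) 1,
      0 ≤ κ ρ ∧ stdGaussianCDF (κ ρ / Real.sqrt 2) = (1 + ρ) / 2)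
    (A : ℝ → ℝ)
    (hA : A = fun ρ => aStar + eStar * stdGaussianCDF ((dMinus - κ ρ) / Real.sqrt 2)) :
    StrictAntiOn A (Set.Ico (0 : ℝ) 1) ∧ ∀ ρ ∈ Set.Ico (0 : ℝ) 1, A ρ < 1 :=
  optimal_team_accuracy_decreasing_general aStar eStar dMinus haStar1 heStar κ hκ A hA
end
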